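/- For every real κ with 1 < κ ≤ 2, the five vectors w_x, w_c, w_f, w_c*, w_z ∈ ℝ⁵ have Gram matrix (with respect to the Lorentzian product, in this order) equal to [[1, −1, −1, 0, 0], [−1, 1, −1, √κ, 0], [−1, −1, 1, 0, 0], [0, √κ, 0, 1, 0], [0, 0, 0, 0, 1]]; this matrix has determinant −4, and in particular the five vectors are linearly independent and form a basis of ℝ⁵. -/

import Mathlib

/-!
If `A` is the matrix with rows `w_x, w_c, w_f, w_c*, w_z` and `J = diag(1, 1, 1, 1, -1)`, the
Gram matrix is `G = A J Aᵀ`, so `det G = -(det A)² = -4` forces `det A ≠ 0`: the five vectors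
are independent, hence a basis of ℝ⁵. The entries of `G` are computed after writing `κ = s²`
with `s = √κ > 0`, which turns every entry into a rational function of `s`.
-/

noncomputable section

/-- The Lorentzian product on ℝ⁵: ⟨u,v⟩ = u₁v₁ + u₂v₂ + u₃v₃ + u₄v₄ − u₅v₅. -/
def lprod5 (u v : Fin 5 → ℝ) : ℝ :=
  u 0 * v 0 + u 1 * v 1 + u 2 * v 2 + u 3 * v 3 - u 4 * v 4

/-- Inversive coordinates of the blow-ups to ℝ³ of the standard pyramidal disk
packing, its mirror and tangency disks, and the half-space `{z ≥ 0}`. -/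
def wx : Fin 5 → ℝ := ![0, -1, 0, 1, 1]
def wc (κ : ℝ) : Fin 5 → ℝ := ![0, 1 - κ, 0, -1, κ - 1]
def wf (κ : ℝ) : Fin 5 → ℝ := ![2 / Real.sqrt κ, 0, 0, 2 / κ - 1, 2 / κ]
def wmc : Fin 5 → ℝ := ![0, 1, 0, 1, 1]
def wmf (κ : ℝ) : Fin 5 → ℝ := ![-(2 / Real.sqrt κ), 0, 0, 2 / κ - 1, 2 / κ]
def wcs (κ : ℝ) : Fin 5 → ℝ :=
  ![0, -(Real.sqrt κ / 2), 0, -(1 / Real.sqrt κ), (κ - 2) / (2 * Real.sqrt κ)]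
def wt (κ : ℝ) : Fin 5 → ℝ :=
  ![0, -(2 / Real.sqrt (κ ^ 2 + 4)), 0, κ / Real.sqrt (κ ^ 2 + 4), 0]
def wz : Fin 5 → ℝ := ![0, 0, 1, 0, 0]

/-- The family `{w_x, w_c, w_f, w_c*, w_z}`. -/
def basisFam (κ : ℝ) : Fin 5 → (Fin 5 → ℝ) := ![wx, wc κ, wf κ, wcs κ, wz]


open Matrix

def lorentzMatrix : Matrix (Fin 5) (Fin 5) ℝ := diagonal ![1, 1, 1, 1, -1]

theorem lprod5_eq_dotProduct_mulVec (u v : Fin 5 → ℝ) :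
    lprod5 u v = u ⬝ᵥ (lorentzMatrix *ᵥ v) := by
  simp only [lprod5, lorentzMatrix, mulVec_diagonal, dotProduct, Fin.sum_univ_five]
  simp only [Fin.isValue, cons_val_zero, one_mul, cons_val_one, cons_val, neg_mul, mul_neg]
  ring

theorem Matrix.of_dotProduct_mulVec_eq_mul_mul_transpose {m n R : Type*} [Fintype n]
    [CommSemiring R] (B : Matrix n n R) (v : m → n → R) :
    Matrix.of (fun i j => v i ⬝ᵥ (B *ᵥ v j)) = Matrix.of v * B * (Matrix.of v)ᵀ := by
  ext i j
  simp only [of_apply, mul_apply, transpose_apply, dotProduct, mulVec, Finset.mul_sum,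
    Finset.sum_mul]
  rw [Finset.sum_comm]
  exact Finset.sum_congr rfl fun _ _ => Finset.sum_congr rfl fun _ _ => by ring

theorem Matrix.linearIndependent_of_det_mul_mul_transpose_ne_zero {n K : Type*} [Fintype n]
    [DecidableEq n] [Field K] {A : Matrix n n K} (B : Matrix n n K)
    (h : (A * B * Aᵀ).det ≠ 0) : LinearIndependent K A := by
  refine linearIndependent_rows_iff_isUnit.mpr ((isUnit_iff_isUnit_det A).mpr ?_)
  rw [det_mul, det_mul, det_transpose] at h
  exact isUnit_iff_ne_zero.mpr (left_ne_zero_of_mul (left_ne_zero_of_mul h))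

theorem linearIndependent_of_det_gram_lprod5_ne_zero {v : Fin 5 → Fin 5 → ℝ}
    (h : (Matrix.of fun i j => lprod5 (v i) (v j)).det ≠ 0) : LinearIndependent ℝ v := by
  simp only [lprod5_eq_dotProduct_mulVec, of_dotProduct_mulVec_eq_mul_mul_transpose] at h
  exact linearIndependent_of_det_mul_mul_transpose_ne_zero _ h

def bridgeGram (s : ℝ) : Matrix (Fin 5) (Fin 5) ℝ :=
  !![1, -1, -1, 0, 0;
     -1, 1, -1, s, 0;
     -1, -1, 1, 0, 0;
     0, s, 0, 1, 0;
     0, 0, 0, 0, 1]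

theorem det_bridgeGram (s : ℝ) : (bridgeGram s).det = -4 := by
  simp [bridgeGram, det_succ_row_zero, Fin.sum_univ_succ, Fin.succAbove]
  ring

theorem gram_basisFam_sq {s : ℝ} (hs : 0 < s) :
    (Matrix.of fun i j => lprod5 (basisFam (s ^ 2) i) (basisFam (s ^ 2) j)) =
      bridgeGram s := by
  have hsq : √(s ^ 2) = s := Real.sqrt_sq hs.le
  ext i j
  fin_cases i <;> fin_cases j <;>
    simp [basisFam, bridgeGram, lprod5, wx, wc, wf, wcs, wz, hsq] <;>
    field_simp <;> ring

theorem gram_basisFam {κ : ℝ} (hκ : 0 < κ) :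
    (Matrix.of fun i j => lprod5 (basisFam κ i) (basisFam κ j)) = bridgeGram √κ := by
  simpa only [Real.sq_sqrt hκ.le] using gram_basisFam_sq (Real.sqrt_pos.mpr hκ)

theorem bridge_basis_gram_general (κ : ℝ) (hκ1 : 1 < κ) :
    (Matrix.of fun i j => lprod5 (basisFam κ i) (basisFam κ j)) =
      !![1, -1, -1, 0, 0;
         -1, 1, -1, Real.sqrt κ, 0;
         -1, -1, 1, 0, 0;
         0, Real.sqrt κ, 0, 1, 0;
         0, 0, 0, 0, 1] ∧
    (!![(1 : ℝ), -1, -1, 0, 0;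
        -1, 1, -1, Real.sqrt κ, 0;
        -1, -1, 1, 0, 0;
        0, Real.sqrt κ, 0, 1, 0;
        0, 0, 0, 0, 1]).det = -4 ∧
    LinearIndependent ℝ (basisFam κ) ∧
    Submodule.span ℝ (Set.range (basisFam κ)) = ⊤ := by
  have hgram := gram_basisFam (zero_lt_one.trans hκ1)
  have hindep : LinearIndependent ℝ (basisFam κ) :=
    linearIndependent_of_det_gram_lprod5_ne_zero (by rw [hgram, det_bridgeGram]; norm_num)
  exact ⟨hgram, det_bridgeGram _, hindep, hindep.span_eq_top_of_card_eq_finrank (by simp)⟩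

/-- For `1 < κ ≤ 2`, the Gram matrix of `{w_x, w_c, w_f, w_c*, w_z}` with respect
to the Lorentzian product is the stated matrix; it has determinant `−4`, and the
five vectors are linearly independent and form a basis of ℝ⁵. -/
theorem bridge_basis_gram (κ : ℝ) (hκ1 : 1 < κ) (hκ2 : κ ≤ 2) :
    (Matrix.of fun i j => lprod5 (basisFam κ i) (basisFam κ j)) =
      !![1, -1, -1, 0, 0;
         -1, 1, -1, Real.sqrt κ, 0;
         -1, -1, 1, 0, 0;
         0, Real.sqrt κ, 0, 1, 0;
         0, 0, 0, 0, 1] ∧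
    (!![(1 : ℝ), -1, -1, 0, 0;
        -1, 1, -1, Real.sqrt κ, 0;
        -1, -1, 1, 0, 0;
        0, Real.sqrt κ, 0, 1, 0;
        0, 0, 0, 0, 1]).det = -4 ∧
    LinearIndependent ℝ (basisFam κ) ∧
    Submodule.span ℝ (Set.range (basisFam κ)) = ⊤ :=
  bridge_basis_gram_general κ hκ1
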